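/- Let p be an odd prime, fix ε ∈ {−1,1}, δ₂ ∈ 𝔽_pˣ, δ₁, δ₃, δ₄ ∈ 𝔽_p, and let A = (𝔽_p³ × 𝔽₂, ·, ∘) be the skew brace obtained from the construction with B = (𝔽_p³, +, ∘), (x₁,x₂,x₃) ∘ (y₁,y₂,y₃) = (x₁+y₁+x₃y₂, x₂+y₂, x₃+y₃), C = 𝔽₂, φ_c = P^c, γ_c = Q^c, ψ_c = R^c for P = [[−1,(1/2)δ₁δ₂,δ₁],[0,−1,0],[0,δ₂,1]], Q = [[ε,δ₃,−(1/2)(ε+1)δ₁],[0,−ε,0],[0,(1/2)(ε−1)δ₂,−1]], R = [[1,δ₄,−(1/2)δ₁],[0,−1,0],[0,0,−1]]; the operations are (x,c)·(x',c') = (x + φ_c(x'), c+c') and ((φ_cγ_c)(x), c) ∘ ((φ_{c'}γ_{c'})(x'), c') = ((φ_{c+c'}γ_{c+c'})(ψ_{c'}⁻¹(x) ∘ x'), c+c'). If y = (y₁,y₂,y₃) ∈ 𝔽_p³ is such that ((φ₁γ₁)(y), 1) squares to the identity (0,0) under · and also squares to (0,0) under ∘, then δ₂y₂ + 2y₃ =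 0 and 2y₁ + δ₄y₂ − (1/2)δ₁y₃ − y₃y₂ = 0. -/

import Mathlib

/-- The multiplicative operation of the skew brace `B = (𝔽_p³, +, ∘)`:
`(x₁,x₂,x₃) ∘ (y₁,y₂,y₃) = (x₁ + y₁ + x₃y₂, x₂ + y₂, x₃ + y₃)`. -/
def circH {p : ℕ} (x y : Fin 3 → ZMod p) : Fin 3 → ZMod p :=
  ![x 0 + y 0 + x 2 * y 1, x 1 + y 1, x 2 + y 2]

/-- The matrix `P` defining `φ`. -/
def Pmat (p : ℕ) (δ₁ δ₂ : ZMod p) : Matrix (Fin 3) (Fin 3) (ZMod p) :=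
  !![-1, (2 : ZMod p)⁻¹ * (δ₁ * δ₂), δ₁; 0, -1, 0; 0, δ₂, 1]

/-- The matrix `Q` defining `γ`. -/
def Qmat (p : ℕ) (ε δ₁ δ₂ δ₃ : ZMod p) : Matrix (Fin 3) (Fin 3) (ZMod p) :=
  !![ε, δ₃, -((2 : ZMod p)⁻¹ * ((ε + 1) * δ₁)); 0, -ε, 0;
     0, (2 : ZMod p)⁻¹ * ((ε - 1) * δ₂), -1]

/-- The matrix `R` defining `ψ`. -/
def Rmat (p : ℕ) (δ₁ δ₄ : ZMod p) : Matrix (Fin 3) (Fin 3) (ZMod p) :=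
  !![1, δ₄, -((2 : ZMod p)⁻¹ * δ₁); 0, -1, 0; 0, 0, -1]

/-- The additive operation of the skew brace `A = (𝔽_p³ × 𝔽₂, ·, ∘)`:
`(x, c) · (x', c') = (x + φ_c(x'), c + c')` with `φ_c = P^c`. -/
noncomputable def dotA (p : ℕ) (δ₁ δ₂ : ZMod p)
    (a b : (Fin 3 → ZMod p) × ZMod 2) : (Fin 3 → ZMod p) × ZMod 2 :=
  (a.1 + (Pmat p δ₁ δ₂ ^ a.2.val).mulVec b.1, a.2 + b.2)

/-- The multiplicative operation of the skew brace `A = (𝔽_p³ × 𝔽₂, ·, ∘)`: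
`((φ_cγ_c)(x), c) ∘ ((φ_{c'}γ_{c'})(x'), c') = ((φ_{c+c'}γ_{c+c'})(ψ_{c'}⁻¹(x) ∘ x'), c+c')`,
written directly as
`(x, c) ∘ (x', c') = ((φ_{c+c'}γ_{c+c'})(ψ_{c'}⁻¹((γ_c⁻¹φ_c⁻¹)(x)) ∘ (γ_{c'}⁻¹φ_{c'}⁻¹)(x')), c+c')`,
with `φ_c = P^c`, `γ_c = Q^c`, `ψ_c = R^c`. -/
noncomputable def circA (p : ℕ) (ε δ₁ δ₂ δ₃ δ₄ : ZMod p)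
    (a b : (Fin 3 → ZMod p) × ZMod 2) : (Fin 3 → ZMod p) × ZMod 2 :=
  ((Pmat p δ₁ δ₂ ^ (a.2 + b.2).val * Qmat p ε δ₁ δ₂ δ₃ ^ (a.2 + b.2).val).mulVec
      (circH
        (((Rmat p δ₁ δ₄ ^ b.2.val)⁻¹).mulVec
          (((Qmat p ε δ₁ δ₂ δ₃ ^ a.2.val)⁻¹).mulVec
            (((Pmat p δ₁ δ₂ ^ a.2.val)⁻¹).mulVec a.1)))
        (((Qmat p ε δ₁ δ₂ δ₃ ^ b.2.val)⁻¹).mulVec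
          (((Pmat p δ₁ δ₂ ^ b.2.val)⁻¹).mulVec b.1))),
    a.2 + b.2)

/-! `P`, `Q` and `R` are involutions (this needs `2` invertible in `ZMod p` and `ε² = 1`), so for an
element `((φ₁γ₁)(y), 1)` all the twisting collapses: its square under `·` is `((P + 1)Qy, 0)` and
its square under `∘` is `(Ry ∘ y, 0)`. The two identities are the third coordinate of the first
and the first coordinate of the second. -/

open Matrix

theorem ZMod.two_mul_inv_two_of_odd {p : ℕ} (hp : Odd p) : (2 : ZMod p) * 2⁻¹ = 1 := by
  exact_mod_cast ZMod.coe_mul_inv_eq_one 2 hp.coprime_two_left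

section Involutions

variable {p : ℕ}

theorem Pmat_mul_self {δ₁ δ₂ : ZMod p} (h2 : (2 : ZMod p) * 2⁻¹ = 1) :
    Pmat p δ₁ δ₂ * Pmat p δ₁ δ₂ = 1 := by
  rw [Pmat, Matrix.mul_fin_three, Matrix.one_fin_three]
  congr <;> grind

theorem Qmat_mul_self {ε δ₁ δ₂ δ₃ : ZMod p} (hε : ε ^ 2 = 1) :
    Qmat p ε δ₁ δ₂ δ₃ * Qmat p ε δ₁ δ₂ δ₃ = 1 := by
  rw [Qmat, Matrix.mul_fin_three, Matrix.one_fin_three]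
  congr <;> grind

theorem Rmat_mul_self {δ₁ δ₄ : ZMod p} : Rmat p δ₁ δ₄ * Rmat p δ₁ δ₄ = 1 := by
  rw [Rmat, Matrix.mul_fin_three, Matrix.one_fin_three]
  congr <;> ring

end Involutions

section SquaresOfOddElements

variable {p : ℕ} {ε δ₁ δ₂ δ₃ δ₄ : ZMod p}

theorem dotA_self_of_snd_one (x : Fin 3 → ZMod p) :
    dotA p δ₁ δ₂ (x, 1) (x, 1) = (x + Pmat p δ₁ δ₂ *ᵥ x, 0) := by
  simp only [dotA, ZMod.val_one, pow_one]
  rfl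

theorem circA_self_of_snd_one (hP : Pmat p δ₁ δ₂ * Pmat p δ₁ δ₂ = 1)
    (hQ : Qmat p ε δ₁ δ₂ δ₃ * Qmat p ε δ₁ δ₂ δ₃ = 1) (hR : Rmat p δ₁ δ₄ * Rmat p δ₁ δ₄ = 1)
    (x : Fin 3 → ZMod p) :
    circA p ε δ₁ δ₂ δ₃ δ₄ (x, 1) (x, 1) =
      (circH (Rmat p δ₁ δ₄ *ᵥ Qmat p ε δ₁ δ₂ δ₃ *ᵥ Pmat p δ₁ δ₂ *ᵥ x)
        (Qmat p ε δ₁ δ₂ δ₃ *ᵥ Pmat p δ₁ δ₂ *ᵥ x), 0) := by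
  have h11 : (1 + 1 : ZMod 2) = 0 := rfl
  simp only [circA, h11, ZMod.val_zero, ZMod.val_one, pow_zero, pow_one, mul_one,
    Matrix.one_mulVec, Matrix.inv_eq_right_inv hP, Matrix.inv_eq_right_inv hQ,
    Matrix.inv_eq_right_inv hR]

end SquaresOfOddElements

section Coordinates

variable {p : ℕ} {ε δ₁ δ₂ δ₃ δ₄ : ZMod p}

theorem Pmat_mul_Qmat_mulVec_add_Qmat_mulVec_two (h2 : (2 : ZMod p) * 2⁻¹ = 1)
    (y : Fin 3 → ZMod p) :
    ((Pmat p δ₁ δ₂ * Qmat p ε δ₁ δ₂ δ₃) *ᵥ y + Qmat p ε δ₁ δ₂ δ₃ *ᵥ y) 2 =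
      -(δ₂ * y 1 + 2 * y 2) := by
  simp only [Pmat, Qmat, Pi.add_apply, mulVec, dotProduct, mul_apply, Fin.sum_univ_three, of_apply,
    cons_val', cons_val_zero, cons_val_one, cons_val, cons_val_fin_one]
  linear_combination ((ε - 1) * δ₂ * y 1) * h2

theorem circH_Rmat_mulVec_self_zero (y : Fin 3 → ZMod p) :
    circH (Rmat p δ₁ δ₄ *ᵥ y) y 0 = 2 * y 0 + δ₄ * y 1 - 2⁻¹ * (δ₁ * y 2) - y 2 * y 1 := by
  simp only [circH, Rmat, mulVec, dotProduct, Fin.sum_univ_three, of_apply,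
    cons_val', cons_val_zero, cons_val_one, cons_val, cons_val_fin_one]
  ring

end Coordinates

theorem order_two_element_constraints_general (p : ℕ) (hodd : Odd p)
    (ε : ZMod p) (hε : ε = 1 ∨ ε = -1) (δ₁ δ₂ δ₃ δ₄ : ZMod p)
    (y : Fin 3 → ZMod p)
    (hdot : dotA p δ₁ δ₂ ((Pmat p δ₁ δ₂ * Qmat p ε δ₁ δ₂ δ₃).mulVec y, 1)
        ((Pmat p δ₁ δ₂ * Qmat p ε δ₁ δ₂ δ₃).mulVec y, 1) = (0, 0))
    (hcirc : circA p ε δ₁ δ₂ δ₃ δ₄ ((Pmat p δ₁ δ₂ * Qmat p ε δ₁ δ₂ δ₃).mulVec y, 1)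
        ((Pmat p δ₁ δ₂ * Qmat p ε δ₁ δ₂ δ₃).mulVec y, 1) = (0, 0)) :
    δ₂ * y 1 + 2 * y 2 = 0 ∧
    2 * y 0 + δ₄ * y 1 - (2 : ZMod p)⁻¹ * (δ₁ * y 2) - y 2 * y 1 = 0 := by
  have h2 := ZMod.two_mul_inv_two_of_odd hodd
  have hP : Pmat p δ₁ δ₂ * Pmat p δ₁ δ₂ = 1 := Pmat_mul_self h2
  have hQ : Qmat p ε δ₁ δ₂ δ₃ * Qmat p ε δ₁ δ₂ δ₃ = 1 :=
    Qmat_mul_self (by rcases hε with rfl | rfl <;> ring)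
  have hPPQ : Pmat p δ₁ δ₂ *ᵥ (Pmat p δ₁ δ₂ * Qmat p ε δ₁ δ₂ δ₃) *ᵥ y =
      Qmat p ε δ₁ δ₂ δ₃ *ᵥ y := by
    rw [mulVec_mulVec, ← Matrix.mul_assoc, hP, Matrix.one_mul]
  have hQQ : Qmat p ε δ₁ δ₂ δ₃ *ᵥ Qmat p ε δ₁ δ₂ δ₃ *ᵥ y = y := by
    rw [mulVec_mulVec, hQ, one_mulVec]
  rw [dotA_self_of_snd_one, hPPQ, Prod.mk.injEq] at hdot
  rw [circA_self_of_snd_one hP hQ Rmat_mul_self, hPPQ, hQQ, Prod.mk.injEq] at hcirc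
  constructor
  · rw [← neg_eq_zero, ← Pmat_mul_Qmat_mulVec_add_Qmat_mulVec_two h2, hdot.1]
    rfl
  · rw [← circH_Rmat_mulVec_self_zero, hcirc.1]
    rfl

/-- If `((φ₁γ₁)(y), 1)` squares to the identity `(0, 0)` under both operations of the
skew brace `A = (𝔽_p³ × 𝔽₂, ·, ∘)`, then `δ₂y₂ + 2y₃ = 0` and
`2y₁ + δ₄y₂ - (1/2)δ₁y₃ - y₃y₂ = 0`. -/
theorem order_two_element_constraints (p : ℕ) (hp : p.Prime) (hodd : Odd p)
    (ε : ZMod p) (hε : ε = 1 ∨ ε = -1) (δ₁ δ₂ δ₃ δ₄ : ZMod p) (hδ₂ : δ₂ ≠ 0)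
    (y : Fin 3 → ZMod p)
    (hdot : dotA p δ₁ δ₂ ((Pmat p δ₁ δ₂ * Qmat p ε δ₁ δ₂ δ₃).mulVec y, 1)
        ((Pmat p δ₁ δ₂ * Qmat p ε δ₁ δ₂ δ₃).mulVec y, 1) = (0, 0))
    (hcirc : circA p ε δ₁ δ₂ δ₃ δ₄ ((Pmat p δ₁ δ₂ * Qmat p ε δ₁ δ₂ δ₃).mulVec y, 1)
        ((Pmat p δ₁ δ₂ * Qmat p ε δ₁ δ₂ δ₃).mulVec y, 1) = (0, 0)) :
    δ₂ * y 1 + 2 * y 2 = 0 ∧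
    2 * y 0 + δ₄ * y 1 - (2 : ZMod p)⁻¹ * (δ₁ * y 2) - y 2 * y 1 = 0 :=
  order_two_element_constraints_general p hodd ε hε δ₁ δ₂ δ₃ δ₄ y hdot hcirc
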